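/- Let C be a completely regular code of covering radius 3 in the hypercube H(n) all of whose codewords have even weight. Then (C, C^{(2)}) is an equitable 2-partition of the halved n-cube, where C^{(2)} is the set of vertices at Hamming distance exactly 2 from C. -/

import Mathlib

open Finset

/-- The hypercube graph on binary words indexed by `ι`. -/
def cube (ι : Type*) [Fintype ι] [DecidableEq ι] : SimpleGraph (ι → ZMod 2) where
  Adj x y := hammingDist x y = 1
  symm := ⟨fun x y (h : hammingDist x y = 1) => (hammingDist_comm y x).trans h⟩
  loopless := ⟨fun x h => by simp [hammingDist_self] at h⟩

instance (ι : Type*) [Fintype ι] [DecidableEq ι] : DecidableRel (cube ι).Adj :=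
  fun x y => inferInstanceAs (Decidable (hammingDist x y = 1))

/-- The halved hypercube: even-weight words, adjacent iff Hamming distance 2. -/
def halvedCube (ι : Type*) [Fintype ι] [DecidableEq ι] :
    SimpleGraph {x : ι → ZMod 2 // Even (hammingDist x 0)} where
  Adj x y := hammingDist x.1 y.1 = 2
  symm := ⟨fun (x y : {x : ι → ZMod 2 // Even (hammingDist x 0)})
    (h : hammingDist x.1 y.1 = 2) => (hammingDist_comm y.1 x.1).trans h⟩
  loopless := ⟨fun x h => by simp [hammingDist_self] at h⟩

instance (ι : Type*) [Fintype ι] [DecidableEq ι] : DecidableRel (halvedCube ι).Adj :=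
  fun x y => inferInstanceAs (Decidable (hammingDist x.1 y.1 = 2))

variable {V : Type*} [Fintype V] [DecidableEq V]

/-- Number of neighbors of `v` in the set `C`. -/
def nbrCount (G : SimpleGraph V) [DecidableRel G.Adj] (v : V) (C : Finset V) : ℕ :=
  (C.filter (G.Adj v)).card

/-- `(C0, C1)` is an equitable 2-partition with quotient matrix `[[a,b],[c,d]]`. -/
def IsEquitable2 (G : SimpleGraph V) [DecidableRel G.Adj] (C0 C1 : Finset V)
    (a b c d : ℕ) : Prop :=
  Disjoint C0 C1 ∧ C0 ∪ C1 = Finset.univ ∧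
  (∀ v ∈ C0, nbrCount G v C0 = a ∧ nbrCount G v C1 = b) ∧
  (∀ v ∈ C1, nbrCount G v C0 = c ∧ nbrCount G v C1 = d)

/-- `C` is an equitable `k`-partition with quotient matrix `S`. -/
def IsEquitableK (G : SimpleGraph V) [DecidableRel G.Adj] {k : ℕ}
    (C : V → Fin k) (S : Fin k → Fin k → ℕ) : Prop :=
  ∀ (v : V) (j : Fin k),
    (Finset.univ.filter (fun w => G.Adj v w ∧ C w = j)).card = S (C v) j

/-!
The key quantity is the number of length-2 walks in `H(n)` from `v` to the cell `C⁽ʲ⁾`. Counting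
them through the middle vertex, complete regularity makes it the entry `(S²)_{d(v), j}` of the
square of the quotient matrix. Counting them through the endpoint, each `w` at distance 2 from `v`
is reached by exactly two walks and `v` itself by `n`, so the number of such `w` in `C⁽ʲ⁾` is
determined by `d(v) = d(v, C)`. Since the codewords are even, `d(v) ≡ wt(v) (mod 2)`, and as
`d(v) ≤ 3` the even-weight words, i.e. the vertices of the halved cube, are exactly `C ∪ C⁽²⁾`.
-/

theorem SimpleGraph.sum_card_walks_length_two {α : Type*} [Fintype α] (G : SimpleGraph α)
    [DecidableRel G.Adj] {f : α → ℕ} {m : ℕ} (hf : ∀ v, f v ≤ m) {S : ℕ → ℕ → ℕ}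
    (hS : ∀ v, ∀ j ≤ m, #{w | G.Adj v w ∧ f w = j} = S (f v) j) (v : α) {j : ℕ} (hj : j ≤ m) :
    ∑ w with f w = j, #{u | G.Adj v u ∧ G.Adj u w} = ∑ i ∈ range (m + 1), S (f v) i * S i j := by
  calc ∑ w with f w = j, #{u | G.Adj v u ∧ G.Adj u w}
      = ∑ u with G.Adj v u, #{w | G.Adj u w ∧ f w = j} := by
        simp only [card_eq_sum_ones]
        refine sum_comm' fun w u => ?_
        simp only [mem_filter, mem_univ, true_and]
        tauto
    _ = ∑ u with G.Adj v u, S (f u) j := sum_congr rfl fun u _ => hS u j hj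
    _ = ∑ i ∈ range (m + 1), ∑ u with G.Adj v u ∧ f u = i, S i j := by
        rw [← sum_fiberwise_of_maps_to (t := range (m + 1)) (g := f)
          (fun u _ => mem_range.2 (Nat.lt_succ_of_le (hf u)))]
        refine sum_congr rfl fun i _ => ?_
        rw [filter_filter]
        exact sum_congr rfl fun u hu => by rw [(mem_filter.1 hu).2.2]
    _ = ∑ i ∈ range (m + 1), S (f v) i * S i j := by
        refine sum_congr rfl fun i hi => ?_
        rw [sum_const, smul_eq_mul, hS v i (Nat.le_of_lt_succ (mem_range.1 hi))]

namespace Hypercube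

section

variable {ι : Type*} [Fintype ι]

theorem cast_hammingDist_zmod_two (x y : ι → ZMod 2) :
    (hammingDist x y : ZMod 2) = ∑ i, x i + ∑ i, y i := by
  have h : ∀ a b : ZMod 2, (if a ≠ b then 1 else 0) = a + b := by decide
  rw [hammingDist, card_eq_sum_ones, Nat.cast_sum, Nat.cast_one, sum_filter]
  simp only [h, sum_add_distrib]

theorem even_hammingDist_zero_iff (x : ι → ZMod 2) :
    Even (hammingDist x 0) ↔ ∑ i, x i = 0 := by
  rw [← ZMod.natCast_eq_zero_iff_even, cast_hammingDist_zmod_two]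
  simp

theorem even_hammingDist_zero_of_even {x y : ι → ZMod 2} (hxy : Even (hammingDist x y))
    (hx : Even (hammingDist x 0)) : Even (hammingDist y 0) := by
  rw [← ZMod.natCast_eq_zero_iff_even, cast_hammingDist_zmod_two] at hxy
  rw [even_hammingDist_zero_iff] at hx ⊢
  rwa [hx, zero_add] at hxy

def codeDist (C : Finset (ι → ZMod 2)) (hC : C.Nonempty) (v : ι → ZMod 2) : ℕ :=
  C.inf' hC (fun x => hammingDist v x)

variable {C : Finset (ι → ZMod 2)} {hC : C.Nonempty}

theorem codeDist_eq_zero_iff {v : ι → ZMod 2} : codeDist C hC v = 0 ↔ v ∈ C := by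
  constructor
  · intro h
    obtain ⟨x, hx, hvx⟩ := exists_mem_eq_inf' hC (fun x => hammingDist v x)
    rwa [hammingDist_eq_zero.1 (hvx.symm.trans h)]
  · intro hv
    exact Nat.eq_zero_of_le_zero (hammingDist_self v ▸ inf'_le _ hv)

theorem even_codeDist_iff (heven : ∀ x ∈ C, Even (hammingDist x 0)) (v : ι → ZMod 2) :
    Even (codeDist C hC v) ↔ Even (hammingDist v 0) := by
  obtain ⟨x, hx, hvx⟩ := exists_mem_eq_inf' hC (fun x => hammingDist v x)
  have hx0 := (even_hammingDist_zero_iff x).1 (heven x hx)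
  rw [codeDist, hvx, ← ZMod.natCast_eq_zero_iff_even, cast_hammingDist_zmod_two, hx0, add_zero,
    even_hammingDist_zero_iff]

end

variable {ι : Type*} [DecidableEq ι]

def flipAt (v : ι → ZMod 2) (i : ι) : ι → ZMod 2 :=
  Function.update v i (v i + 1)

theorem flipAt_flipAt (v : ι → ZMod 2) (i : ι) : flipAt (flipAt v i) i = v := by
  ext k
  by_cases hk : k = i
  · subst hk
    simp only [flipAt, Function.update_self, add_assoc]
    exact add_eq_left.2 (by decide)
  · simp [flipAt, hk]

theorem flipAt_injective (v : ι → ZMod 2) : Function.Injective (flipAt v) := by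
  intro i j hij
  by_contra hne
  have h := congrFun hij i
  simp [flipAt, hne] at h

variable [Fintype ι]

theorem hammingDist_flipAt_of_eq {v w : ι → ZMod 2} {i : ι} (h : v i = w i) :
    hammingDist (flipAt v i) w = hammingDist v w + 1 := by
  have hset : (univ.filter fun k => flipAt v i k ≠ w k) =
      insert i (univ.filter fun k => v k ≠ w k) := by
    refine Finset.ext fun k => ?_
    simp only [mem_filter, mem_insert, mem_univ, true_and]
    by_cases hk : k = i
    · subst hk
      simp [flipAt, h]
    · simp [flipAt, hk]
  rw [hammingDist, hammingDist, hset, card_insert_of_notMem (by simp [h])]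

theorem hammingDist_flipAt_of_ne {v w : ι → ZMod 2} {i : ι} (h : v i ≠ w i) :
    hammingDist (flipAt v i) w + 1 = hammingDist v w := by
  have hflip : flipAt v i i = w i := by
    have : ∀ a b : ZMod 2, a ≠ b → a + 1 = b := by decide
    simpa [flipAt] using this _ _ h
  simpa only [flipAt_flipAt] using (hammingDist_flipAt_of_eq hflip).symm

theorem hammingDist_flipAt_self (v : ι → ZMod 2) (i : ι) : hammingDist v (flipAt v i) = 1 := by
  rw [hammingDist_comm, hammingDist_flipAt_of_eq rfl, hammingDist_self]

theorem exists_eq_flipAt_of_hammingDist_eq_one {v u : ι → ZMod 2} (h : hammingDist v u = 1) :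
    ∃ i, u = flipAt v i := by
  obtain ⟨i, hi⟩ := Function.ne_iff.1 (hammingDist_pos.1 (h ▸ one_pos))
  refine ⟨i, (hammingDist_eq_zero.1 ?_).symm⟩
  have := hammingDist_flipAt_of_ne hi
  omega

theorem card_hammingDist_eq_one_and (v : ι → ZMod 2) (p : (ι → ZMod 2) → Prop)
    [DecidablePred p] : #{u | hammingDist v u = 1 ∧ p u} = #{i | p (flipAt v i)} := by
  symm
  refine card_bij (fun i _ => flipAt v i) ?_ (fun i _ j _ h => flipAt_injective v h) ?_
  · intro i hi
    simpa [hammingDist_flipAt_self] using hi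
  · intro u hu
    simp only [mem_filter, mem_univ, true_and] at hu
    obtain ⟨i, rfl⟩ := exists_eq_flipAt_of_hammingDist_eq_one hu.1
    exact ⟨i, by simpa using hu.2, rfl⟩

theorem card_commonNeighbors (v w : ι → ZMod 2) :
    #{u | hammingDist v u = 1 ∧ hammingDist u w = 1} =
      if w = v then Fintype.card ι else if hammingDist v w = 2 then 2 else 0 := by
  rw [card_hammingDist_eq_one_and]
  split_ifs with hwv h2
  · subst hwv
    simp [hammingDist_comm _ w, hammingDist_flipAt_self]
  all_goals
    have key : ∀ i, hammingDist (flipAt v i) w = 1 ↔ v i ≠ w i ∧ hammingDist v w = 2 := by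
      intro i
      by_cases hi : v i = w i
      · have := hammingDist_flipAt_of_eq hi
        have := hammingDist_ne_zero.2 (Ne.symm hwv)
        simp only [hi, ne_eq, not_true_eq_false, false_and, iff_false]
        omega
      · have := hammingDist_flipAt_of_ne hi
        simp only [hi, ne_eq, not_false_eq_true, true_and]
        omega
    simp only [key]
  · simp only [h2, and_true]
    exact h2
  · simp [h2]

theorem sum_card_commonNeighbors (s : Finset (ι → ZMod 2)) (v : ι → ZMod 2) :
    ∑ w ∈ s, #{u | hammingDist v u = 1 ∧ hammingDist u w = 1} =
      2 * #{w ∈ s | hammingDist v w = 2} + if v ∈ s then Fintype.card ι else 0 := by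
  have hsplit : ∀ w ∈ s, #{u | hammingDist v u = 1 ∧ hammingDist u w = 1} =
      (if hammingDist v w = 2 then 2 else 0) + if w = v then Fintype.card ι else 0 := by
    intro w _
    rw [card_commonNeighbors]
    by_cases hwv : w = v <;> simp [hwv]
  rw [sum_congr rfl hsplit, sum_add_distrib, sum_ite_eq', ← sum_filter, sum_const, smul_eq_mul,
    mul_comm]

theorem cube_adj {x y : ι → ZMod 2} : (cube ι).Adj x y ↔ hammingDist x y = 1 := Iff.rfl

def halvedQuotient (S : ℕ → ℕ → ℕ) (m n k j : ℕ) : ℕ :=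
  ((∑ i ∈ range (m + 1), S k i * S i j) - if k = j then n else 0) / 2

variable {C : Finset (ι → ZMod 2)} {hC : C.Nonempty}

theorem card_codeDist_eq_and_hammingDist_eq_two {m : ℕ} (hcov : ∀ v, codeDist C hC v ≤ m)
    {S : ℕ → ℕ → ℕ}
    (hS : ∀ v, ∀ j ≤ m, #{w | (cube ι).Adj v w ∧ codeDist C hC w = j} = S (codeDist C hC v) j)
    (v : ι → ZMod 2) {j : ℕ} (hj : j ≤ m) :
    #{w | codeDist C hC w = j ∧ hammingDist v w = 2} =
      halvedQuotient S m (Fintype.card ι) (codeDist C hC v) j := by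
  have hwalks := (cube ι).sum_card_walks_length_two hcov hS v hj
  have hcube := sum_card_commonNeighbors {w | codeDist C hC w = j} v
  simp only [filter_filter, mem_filter, mem_univ, true_and] at hcube
  simp only [cube_adj, hcube] at hwalks
  unfold halvedQuotient
  split_ifs at hwalks ⊢ <;> omega

theorem nbrCount_halvedCube_filter (v : {x : ι → ZMod 2 // Even (hammingDist x 0)})
    (p : (ι → ZMod 2) → Prop) [DecidablePred p] :
    nbrCount (halvedCube ι) v (univ.filter fun w => p w.1) =
      #{w | p w ∧ hammingDist v.1 w = 2} := by
  set s : Finset (ι → ZMod 2) := {w | p w ∧ hammingDist v.1 w = 2}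
  have hsub : s.subtype (fun w => Even (hammingDist w 0)) =
      (univ.filter fun w => p w.1).filter ((halvedCube ι).Adj v) := by
    refine Finset.ext fun w => ?_
    simp only [s, mem_subtype, mem_filter, mem_univ, true_and]
    rfl
  have heven : ∀ w ∈ s, Even (hammingDist w 0) := fun w hw =>
    even_hammingDist_zero_of_even (by rw [(mem_filter.1 hw).2.2]; exact even_two) v.2
  rw [nbrCount, ← hsub, card_subtype, filter_true_of_mem heven]

theorem isEquitable2_halvedCube (heven : ∀ x ∈ C, Even (hammingDist x 0))
    (hcov : ∀ v, codeDist C hC v ≤ 3) {S : ℕ → ℕ → ℕ}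
    (hS : ∀ v, ∀ j ≤ 3, #{w | (cube ι).Adj v w ∧ codeDist C hC w = j} = S (codeDist C hC v) j) :
    IsEquitable2 (halvedCube ι) (univ.filter fun v => v.1 ∈ C)
      (univ.filter fun v => codeDist C hC v.1 = 2)
      (halvedQuotient S 3 (Fintype.card ι) 0 0) (halvedQuotient S 3 (Fintype.card ι) 0 2)
      (halvedQuotient S 3 (Fintype.card ι) 2 0) (halvedQuotient S 3 (Fintype.card ι) 2 2) := by
  have hcell (v : {x : ι → ZMod 2 // Even (hammingDist x 0)}) {j : ℕ} (hj : j ≤ 3) :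
      nbrCount (halvedCube ι) v (univ.filter fun w => codeDist C hC w.1 = j) =
        halvedQuotient S 3 (Fintype.card ι) (codeDist C hC v.1) j := by
    rw [nbrCount_halvedCube_filter v (codeDist C hC · = j),
      card_codeDist_eq_and_hammingDist_eq_two hcov hS v.1 hj]
  have hC0 : (univ.filter fun v : {x : ι → ZMod 2 // Even (hammingDist x 0)} => v.1 ∈ C) =
      univ.filter fun v => codeDist C hC v.1 = 0 := by
    simp only [codeDist_eq_zero_iff]
  rw [hC0]
  refine ⟨disjoint_filter.2 fun v _ h0 h2 => by omega, eq_univ_of_forall fun v => ?_,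
    fun v hv => ?_, fun v hv => ?_⟩
  · obtain ⟨k, hk⟩ := (even_codeDist_iff heven v.1).2 v.2
    have := hcov v.1
    simp only [mem_union, mem_filter, mem_univ, true_and]
    omega
  all_goals
    rw [hcell v (by norm_num), hcell v (by norm_num), (mem_filter.1 hv).2]
    exact ⟨rfl, rfl⟩

end Hypercube

theorem stmt19_general (n : ℕ) (C : Finset (Fin n → ZMod 2)) (hC : C.Nonempty)
    (heven : ∀ x ∈ C, Even (hammingDist x 0))
    (hcov3 : ∀ v : Fin n → ZMod 2, C.inf' hC (fun x => hammingDist v x) ≤ 3)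
    (hCR : ∃ S : ℕ → ℕ → ℕ, ∀ (v : Fin n → ZMod 2), ∀ j ≤ 3,
      (Finset.univ.filter (fun w => (cube (Fin n)).Adj v w ∧
          C.inf' hC (fun x => hammingDist w x) = j)).card =
        S (C.inf' hC (fun x => hammingDist v x)) j) :
    ∃ a b c d : ℕ,
      IsEquitable2 (halvedCube (Fin n))
        (Finset.univ.filter (fun v => v.1 ∈ C))
        (Finset.univ.filter (fun v => C.inf' hC (fun x => hammingDist v.1 x) = 2))
        a b c d := by
  obtain ⟨S, hS⟩ := hCR
  exact ⟨_, _, _, _, Hypercube.isEquitable2_halvedCube heven hcov3 hS⟩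

/-- if `C` is a completely regular code of covering radius 3 in
`H(n)` all of whose codewords have even weight, then `(C, C⁽²⁾)` is an
equitable 2-partition of the halved `n`-cube, where `C⁽²⁾` is the set of
vertices at Hamming distance exactly 2 from `C`. -/
theorem stmt19 (n : ℕ) (C : Finset (Fin n → ZMod 2)) (hC : C.Nonempty)
    (heven : ∀ x ∈ C, Even (hammingDist x 0))
    (hcov3 : ∀ v : Fin n → ZMod 2, C.inf' hC (fun x => hammingDist v x) ≤ 3)
    (hrad3 : ∃ v : Fin n → ZMod 2, C.inf' hC (fun x => hammingDist v x) = 3)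
    (hCR : ∃ S : ℕ → ℕ → ℕ, ∀ (v : Fin n → ZMod 2), ∀ j ≤ 3,
      (Finset.univ.filter (fun w => (cube (Fin n)).Adj v w ∧
          C.inf' hC (fun x => hammingDist w x) = j)).card =
        S (C.inf' hC (fun x => hammingDist v x)) j) :
    ∃ a b c d : ℕ,
      IsEquitable2 (halvedCube (Fin n))
        (Finset.univ.filter (fun v => v.1 ∈ C))
        (Finset.univ.filter (fun v => C.inf' hC (fun x => hammingDist v.1 x) = 2))
        a b c d :=
  stmt19_general n C hC heven hcov3 hCR
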